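/- Fix an integer m ≥ 2 and a nonempty multiset Z = {z_1, z_2, ..., z_n} of integers. Then for every integer s, | (1/2^n) · #{ x ∈ {0,1}^n : Σ_{j=1}^n z_j x_j ≡ s (mod m) } − 1/m | ≤ ((1 + disc(Z, m))/2)^{n/2}. -/

import Mathlib

/-- The `m`-discrepancy of a finite multiset `Z` of integers:
`disc(Z, m) = max_{k = 1, …, m−1} |(1/|Z|) · Σ_{z ∈ Z} exp(2πi·k·z/m)|`,
with the convention `disc(∅, m) = 0`. -/
noncomputable def disc (Z : Multiset ℤ) (m : ℕ) : ℝ :=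
  if h : (Finset.Ioo 0 m).Nonempty then
    (Finset.Ioo 0 m).sup' h fun k =>
      ‖((Z.map fun z : ℤ =>
        Complex.exp (2 * Real.pi * Complex.I * (k : ℂ) * (z : ℂ) / (m : ℂ))).sum)‖ / (Z.card : ℝ)
  else 0

/-!
Expanding the indicator of `∑ z_j x_j ≡ s (mod m)` in the additive characters of `ZMod m` gives
`m · N = ∑_k ω^(-k s) ∏_j (1 + ω^(k z_j))`, whose `k = 0` term is `2^n`. For `k ≠ 0`,
`|1 + ω^(k z_j)|² = 2 (1 + Re ω^(k z_j))`, so by AM-GM the square of the product is at most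
`4^n ((1 + mean_j Re ω^(k z_j)) / 2)^n ≤ 4^n ((1 + disc(Z, m)) / 2)^n`; the `m − 1` error terms
then bound `|m N − 2^n|` by `(m − 1) 2^n ((1 + disc) / 2)^(n/2)`.
-/

open Finset

namespace AddChar

theorem map_sum_eq_prod {ι A M : Type*} [AddCommMonoid A] [CommMonoid M]
    (ψ : AddChar A M) (s : Finset ι) (f : ι → A) : ψ (∑ i ∈ s, f i) = ∏ i ∈ s, ψ (f i) := by
  have := map_prod ψ.toMonoidHom (fun i => Multiplicative.ofAdd (f i)) s
  rwa [← ofAdd_sum] at this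

variable {ι : Type*} [Fintype ι] [DecidableEq ι]

theorem sum_apply_subsetSum {A M : Type*} [AddCommMonoid A] [CommSemiring M]
    (ψ : AddChar A M) (z : ι → A) :
    ∑ x : ι → Bool, ψ (∑ j, if x j then z j else 0) = ∏ j, (1 + ψ (z j)) := by
  have hsplit (j : ι) : 1 + ψ (z j) = ∑ b : Bool, if b then ψ (z j) else 1 := by
    simp [add_comm]
  simp_rw [hsplit, Fintype.prod_sum, map_sum_eq_prod, apply_ite ψ, map_zero_eq_one]

theorem card_mul_card_filter_subsetSum_eq {R : Type*} [CommRing R] [Fintype R] [DecidableEq R]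
    {ψ : AddChar R ℂ} (hψ : ψ.IsPrimitive) (z : ι → R) (s : R) :
    (Fintype.card R : ℂ) * #{x : ι → Bool | ∑ j, (if x j then z j else 0) = s} =
      ∑ k : R, ψ (-(k * s)) * ∏ j, (1 + ψ (k * z j)) := by
  have hind (a : R) :
      (Fintype.card R : ℂ) * (if a = s then 1 else 0) = ∑ k : R, ψ (k * (a - s)) := by
    rw [sum_mulShift _ hψ]; simp [sub_eq_zero]
  rw [card_filter, Nat.cast_sum, mul_sum]
  simp_rw [Nat.cast_ite, Nat.cast_one, Nat.cast_zero, hind]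
  rw [sum_comm]
  refine sum_congr rfl fun k _ => ?_
  rw [← sum_apply_subsetSum, mul_sum]
  refine sum_congr rfl fun x _ => ?_
  rw [← map_add_eq_mul, mul_sub, mul_sum, neg_add_eq_sub]
  simp_rw [mul_ite, mul_zero]

end AddChar

theorem Real.prod_le_mean_pow {ι : Type*} (s : Finset ι) {b : ι → ℝ}
    (hb : ∀ i ∈ s, 0 ≤ b i) : ∏ i ∈ s, b i ≤ ((∑ i ∈ s, b i) / #s) ^ #s := by
  rcases s.eq_empty_or_nonempty with rfl | hs
  · simp
  have hcard : (0 : ℝ) < #s := by exact_mod_cast hs.card_pos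
  have hprod := prod_nonneg hb
  have amgm := Real.geom_mean_le_arith_mean s (fun _ => 1) b (fun _ _ => zero_le_one)
    (by simpa using hcard) hb
  simp only [Real.rpow_one, one_mul, sum_const, nsmul_eq_mul, mul_one] at amgm
  calc ∏ i ∈ s, b i = ((∏ i ∈ s, b i) ^ (#s : ℝ)⁻¹) ^ #s := by
        rw [← Real.rpow_mul_natCast hprod, inv_mul_cancel₀ hcard.ne', Real.rpow_one]
    _ ≤ ((∑ i ∈ s, b i) / #s) ^ #s := by gcongr

theorem Complex.sq_norm_one_add_of_norm_eq_one {u : ℂ} (hu : ‖u‖ = 1) :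
    ‖1 + u‖ ^ 2 = 4 * ((1 + u.re) / 2) := by
  have hsq : Complex.normSq u = 1 := by rw [← Complex.sq_norm, hu, one_pow]
  rw [Complex.normSq_apply] at hsq
  rw [Complex.sq_norm, Complex.normSq_apply]
  simp only [Complex.add_re, Complex.one_re, Complex.add_im, Complex.one_im, zero_add]
  linear_combination hsq

theorem Complex.prod_norm_one_add_le {ι : Type*} [Fintype ι] {u : ι → ℂ} (hu : ∀ j, ‖u j‖ = 1) :
    ∏ j, ‖1 + u j‖ ≤
      2 ^ Fintype.card ι *
        ((1 + ‖∑ j, u j‖ / Fintype.card ι) / 2) ^ ((Fintype.card ι : ℝ) / 2) := by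
  set n := Fintype.card ι with hn
  set A := (1 + ‖∑ j, u j‖ / n) / 2
  set b : ι → ℝ := fun j => (1 + (u j).re) / 2
  have hb (j : ι) : 0 ≤ b j := by
    have := neg_le_of_abs_le ((Complex.abs_re_le_norm (u j)).trans (hu j).le)
    simp only [b]; linarith
  have hmean : (∑ j, b j) / n ≤ A := by
    have hre : ∑ j, (u j).re ≤ ‖∑ j, u j‖ := by
      rw [← Complex.re_sum]; exact Complex.re_le_norm _
    simp only [b, A, ← sum_div, sum_add_distrib, sum_const, card_univ, nsmul_eq_mul, mul_one, ← hn]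
    rcases Nat.eq_zero_or_pos n with hn0 | hn0
    · simp [hn0]
    have : (0 : ℝ) < n := by exact_mod_cast hn0
    rw [div_div, div_le_div_iff₀ (by positivity) two_pos,
      show (1 + ‖∑ j, u j‖ / n) * (2 * n) = 2 * n + 2 * ‖∑ j, u j‖ by field_simp]
    linarith
  have hA : 0 ≤ A := by positivity
  have hsq : (∏ j, ‖1 + u j‖) ^ 2 ≤ (2 ^ n * A ^ ((n : ℝ) / 2)) ^ 2 := by
    rw [mul_pow, ← Real.rpow_mul_natCast hA, Nat.cast_ofNat, div_mul_cancel₀ _ two_ne_zero,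
      Real.rpow_natCast, ← prod_pow]
    simp_rw [Complex.sq_norm_one_add_of_norm_eq_one (hu _)]
    rw [prod_mul_distrib, prod_const, card_univ, ← hn,
      show ((2 : ℝ) ^ n) ^ 2 = 4 ^ n by rw [← pow_mul, mul_comm, pow_mul]; norm_num]
    gcongr
    calc ∏ j, b j ≤ ((∑ j, b j) / n) ^ n := Real.prod_le_mean_pow univ fun j _ => hb j
      _ ≤ A ^ n := by gcongr; exact div_nonneg (sum_nonneg fun j _ => hb j) n.cast_nonneg
  exact (pow_le_pow_iff_left₀ (prod_nonneg fun j _ => norm_nonneg _) (by positivity)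
    two_ne_zero).1 hsq

theorem ZMod.norm_stdAddChar {m : ℕ} [NeZero m] (j : ZMod m) : ‖ZMod.stdAddChar j‖ = 1 :=
  Circle.norm_coe _

theorem disc_nonneg (Z : Multiset ℤ) (m : ℕ) : 0 ≤ disc Z m := by
  unfold disc
  split_ifs with h
  · obtain ⟨k, hk⟩ := h
    exact le_sup'_of_le _ hk (by positivity)
  · exact le_rfl

theorem norm_sum_stdAddChar_div_le_disc {ι : Type*} [Fintype ι] {m : ℕ} [NeZero m] (z : ι → ℤ)
    {k : ZMod m} (hk : k ≠ 0) :
    ‖∑ j, ZMod.stdAddChar (k * (z j : ZMod m))‖ / Fintype.card ι ≤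
      disc (Multiset.map z univ.val) m := by
  have hkm : k.val ∈ Ioo 0 m := mem_Ioo.2 ⟨ZMod.val_pos.2 hk, ZMod.val_lt k⟩
  rw [disc, dif_pos ⟨_, hkm⟩]
  refine le_sup'_of_le _ hkm (le_of_eq ?_)
  have hterm (j : ι) : ZMod.stdAddChar (k * (z j : ZMod m)) =
      Complex.exp (2 * Real.pi * Complex.I * (k.val : ℂ) * (z j : ℂ) / (m : ℂ)) := by
    rw [show k * (z j : ZMod m) = ((k.val * z j : ℤ) : ZMod m) by simp, ZMod.stdAddChar_coe]
    push_cast; ring_nf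
  simp only [hterm, Multiset.map_map, Multiset.card_map, card_val, card_univ]
  rfl

section Counting

variable {ι : Type*} [Fintype ι] {m : ℕ} [NeZero m]

theorem prod_norm_one_add_stdAddChar_le (z : ι → ℤ) {k : ZMod m} (hk : k ≠ 0) :
    ∏ j, ‖1 + ZMod.stdAddChar (k * (z j : ZMod m))‖ ≤
      2 ^ Fintype.card ι *
        ((1 + disc (Multiset.map z univ.val) m) / 2) ^ ((Fintype.card ι : ℝ) / 2) := by
  refine (Complex.prod_norm_one_add_le fun j => ZMod.norm_stdAddChar _).trans ?_
  gcongr 2 ^ _ * ?_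
  exact Real.rpow_le_rpow (by positivity)
    (by gcongr; exact norm_sum_stdAddChar_div_le_disc z hk) (by positivity)

theorem norm_mul_card_filter_subsetSum_sub_le [DecidableEq ι] (z : ι → ℤ) (s : ZMod m) :
    ‖(m : ℂ) * #{x : ι → Bool | ∑ j, (if x j then (z j : ZMod m) else 0) = s} -
        2 ^ Fintype.card ι‖ ≤
      (m - 1) * (2 ^ Fintype.card ι *
        ((1 + disc (Multiset.map z univ.val) m) / 2) ^ ((Fintype.card ι : ℝ) / 2)) := by
  set n := Fintype.card ι
  set B := ((1 + disc (Multiset.map z univ.val) m) / 2) ^ ((n : ℝ) / 2)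
  have hexp := AddChar.card_mul_card_filter_subsetSum_eq (ZMod.isPrimitive_stdAddChar m)
    (fun j => (z j : ZMod m)) s
  rw [← add_sum_erase _ _ (mem_univ 0), ZMod.card] at hexp
  simp only [zero_mul, neg_zero, AddChar.map_zero_eq_one, one_add_one_eq_two, prod_const,
    card_univ, one_mul] at hexp
  rw [hexp, add_sub_cancel_left]
  refine (norm_sum_le _ _).trans ((sum_le_sum (g := fun _ => 2 ^ n * B) fun k hk => ?_).trans ?_)
  · rw [norm_mul, ZMod.norm_stdAddChar, one_mul, norm_prod]
    exact prod_norm_one_add_stdAddChar_le z (ne_of_mem_erase hk)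
  · rw [sum_const, card_erase_of_mem (mem_univ _), card_univ, ZMod.card, nsmul_eq_mul,
      Nat.cast_pred (NeZero.pos m)]

theorem abs_card_filter_subsetSum_div_sub_le [DecidableEq ι] (z : ι → ℤ) (s : ZMod m) :
    |(#{x : ι → Bool | ∑ j, (if x j then (z j : ZMod m) else 0) = s} : ℝ) / 2 ^ Fintype.card ι
        - 1 / m| ≤
      ((1 + disc (Multiset.map z univ.val) m) / 2) ^ ((Fintype.card ι : ℝ) / 2) := by
  set n := Fintype.card ι
  set B := ((1 + disc (Multiset.map z univ.val) m) / 2) ^ ((n : ℝ) / 2)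
  set N := #{x : ι → Bool | ∑ j, (if x j then (z j : ZMod m) else 0) = s}
  have hB : 0 ≤ B := Real.rpow_nonneg (by linarith [disc_nonneg (Multiset.map z univ.val) m]) _
  have hm : (0 : ℝ) < m := by exact_mod_cast NeZero.pos m
  have herr := norm_mul_card_filter_subsetSum_sub_le z s
  rw [show (m : ℂ) * N - 2 ^ n = ((m * N - 2 ^ n : ℝ) : ℂ) by push_cast; rfl, Complex.norm_real,
    Real.norm_eq_abs] at herr
  rw [show (N : ℝ) / 2 ^ n - 1 / m = (m * N - 2 ^ n) / (m * 2 ^ n) by field_simp, abs_div,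
    abs_of_pos (by positivity : (0 : ℝ) < m * 2 ^ n), div_le_iff₀ (by positivity)]
  calc |(m : ℝ) * N - 2 ^ n| ≤ (m - 1) * (2 ^ n * B) := herr
    _ ≤ B * (m * 2 ^ n) := by nlinarith [pow_pos (two_pos : (0 : ℝ) < 2) n]

end Counting

open Classical in
theorem stmt_12_general (m n : ℕ) (hm : 2 ≤ m) (z : Fin n → ℤ) (s : ℤ) :
    |((Finset.univ.filter fun x : Fin n → Bool =>
          (∑ j, if x j then z j else 0) ≡ s [ZMOD (m : ℤ)]).card : ℝ) / 2 ^ n - 1 / m| ≤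
      ((1 + disc (Multiset.map z Finset.univ.val) m) / 2) ^ ((n : ℝ) / 2) := by
  have : NeZero m := ⟨by omega⟩
  have hfilter :
      (univ.filter fun x : Fin n → Bool => (∑ j, if x j then z j else 0) ≡ s [ZMOD m]) =
      univ.filter fun x => ∑ j, (if x j then (z j : ZMod m) else 0) = (s : ZMod m) :=
    filter_congr fun x _ => by
      rw [← ZMod.intCast_eq_intCast_iff, Int.cast_sum]
      simp only [apply_ite (Int.cast : ℤ → ZMod m), Int.cast_zero]
  simpa only [hfilter, Fintype.card_fin] using abs_card_filter_subsetSum_div_sub_le z (s : ZMod m)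

open Classical in
theorem stmt_12 (m n : ℕ) (hm : 2 ≤ m) (hn : 0 < n) (z : Fin n → ℤ) (s : ℤ) :
    |((Finset.univ.filter fun x : Fin n → Bool =>
          (∑ j, if x j then z j else 0) ≡ s [ZMOD (m : ℤ)]).card : ℝ) / 2 ^ n - 1 / m| ≤
      ((1 + disc (Multiset.map z Finset.univ.val) m) / 2) ^ ((n : ℝ) / 2) :=
  stmt_12_general m n hm z s
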